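/- If a graph G is generically bearing rigid in R^d (i.e., there exists a configuration p with (G,p) bearing rigid), then for any configuration p_0 and any epsilon > 0 there exists a configuration p with ||p - p_0|| < epsilon such that (G, p) is bearing rigid. -/

import Mathlib

/-!
For an injective configuration `p` of at least two points, the `d` translations and the scaling
`p` itself form the rows of a matrix `W` with `L(p) Wᵀ = 0`, and since `L(p)` is symmetric,
`(G, p)` is bearing rigid iff `det (L(p) + Wᵀ W) ≠ 0`. Along the line
`p_t = p₀ + t (p₁ - p₀)` the entries of `L(p_t)` are rational in `t` with denominators
`‖p_t j - p_t i‖²`; multiplying by the product `D(t)` of all of these gives a polynomial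
`D(t) · det (D(t) (L(p_t) + W_tᵀ W_t))` whose nonvanishing is exactly bearing rigidity of `p_t`.
It does not vanish at `t = 1`, so it has finitely many roots, and every small enough `t ≠ 0`
outside them gives a bearing rigid configuration close to `p₀`.
-/

open Matrix

open scoped Classical in
/-- The orthogonal projection matrix `P(x) = I - x xᵀ / ‖x‖²`. -/
noncomputable def proj {d : ℕ} (x : Fin d → ℝ) : Matrix (Fin d) (Fin d) ℝ :=
  1 - (x ⬝ᵥ x)⁻¹ • Matrix.vecMulVec x x

open scoped Classical in
/-- The bearing Laplacian of the network `(G, p)`: the `dn × dn` block matrix with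
`[L]_{ij} = -P(g_{ij})` for edges `(i,j)`, `0` for non-adjacent `i ≠ j`, and
`[L]_{ii} = ∑_{j ∈ N_i} P(g_{ij})`.  Since `proj` is scale-invariant,
`proj (p j - p i) = P(g_{ij})` for the unit bearing `g_{ij}`. -/
noncomputable def bearingLaplacian {V : Type*} [Fintype V] {d : ℕ}
    (G : SimpleGraph V) (p : V → Fin d → ℝ) :
    Matrix (V × Fin d) (V × Fin d) ℝ :=
  fun q r =>
    if q.1 = r.1 then
      (∑ k ∈ Finset.univ.filter (fun k => G.Adj q.1 k), proj (p k - p q.1)) q.2 r.2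
    else if G.Adj q.1 r.1 then -(proj (p r.1 - p q.1) q.2 r.2) else 0

namespace Matrix

variable {ι κ K : Type*} [Fintype ι] [Fintype κ] [Field K]

theorem rank_add_le {m : Type*} (A B : Matrix m ι K) : (A + B).rank ≤ A.rank + B.rank := by
  unfold rank
  rw [mulVecLin_add]
  exact (Submodule.finrank_mono (LinearMap.range_add_le _ _)).trans
    (Submodule.finrank_add_le_finrank_add_finrank _ _)

theorem rank_add_card_le_of_mul_transpose_eq_zero {m : Type*} [Finite m] {A : Matrix m ι K}
    {W : Matrix κ ι K} (hW : LinearIndependent K W.row) (hAW : A * Wᵀ = 0) :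
    A.rank + Fintype.card κ ≤ Fintype.card ι := by
  simpa [rank_transpose, hW.rank_matrix] using rank_add_rank_le_card_of_mul_eq_zero hAW

theorem span_row_eq_ker_of_rank_eq {A : Matrix ι ι K} {W : Matrix κ ι K}
    (hW : LinearIndependent K W.row) (hAW : A * Wᵀ = 0)
    (hrank : A.rank = Fintype.card ι - Fintype.card κ) :
    Submodule.span K (Set.range W.row) = LinearMap.ker A.mulVecLin := by
  have hle := rank_add_card_le_of_mul_transpose_eq_zero hW hAW
  refine Submodule.eq_of_le_of_finrank_le ?_ ?_
  · rw [Submodule.span_le]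
    rintro _ ⟨c, rfl⟩
    ext x
    simpa [mul_apply, mulVec, dotProduct, row] using congrFun (congrFun hAW x) c
  · have := LinearMap.finrank_range_add_finrank_ker A.mulVecLin
    rw [← rank_eq_finrank_span_row, hW.rank_matrix]
    simp only [rank, Module.finrank_fintype_fun_eq_card] at this hrank
    omega

variable [LinearOrder K] [IsStrictOrderedRing K]

theorem mulVec_add_transpose_mul_self_eq_zero_iff {A : Matrix ι ι K} (hA : A.IsSymm)
    {W : Matrix κ ι K} (hAW : A * Wᵀ = 0) (v : ι → K) :
    (A + Wᵀ * W) *ᵥ v = 0 ↔ A *ᵥ v = 0 ∧ W *ᵥ v = 0 := by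
  refine ⟨fun hv => ?_, fun ⟨hAv, hWv⟩ => by simp [add_mulVec, ← mulVec_mulVec, hAv, hWv]⟩
  have hAv : A *ᵥ v = -(Wᵀ *ᵥ (W *ᵥ v)) := by
    rw [add_mulVec, ← mulVec_mulVec] at hv
    exact eq_neg_of_add_eq_zero_left hv
  -- `A v` lies in the range of `Wᵀ`, which `A` kills; as `A` is symmetric,
  -- `‖A v‖² = ⟪v, A (A v)⟫ = 0`.
  have hAv0 : A *ᵥ v = 0 := by
    apply dotProduct_self_eq_zero.mp
    rw [dotProduct_mulVec, ← mulVec_transpose, hA.eq, hAv, mulVec_neg, mulVec_mulVec, hAW,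
      zero_mulVec, neg_zero, zero_dotProduct]
  refine ⟨hAv0, dotProduct_self_eq_zero.mp ?_⟩
  rw [hAv0, eq_comm, neg_eq_zero] at hAv
  rw [dotProduct_mulVec, ← mulVec_transpose, hAv, zero_dotProduct]

theorem rank_eq_card_sub_card_iff_det_add_transpose_mul_self_ne_zero [DecidableEq ι]
    {A : Matrix ι ι K} (hA : A.IsSymm) {W : Matrix κ ι K} (hW : LinearIndependent K W.row)
    (hAW : A * Wᵀ = 0) :
    A.rank = Fintype.card ι - Fintype.card κ ↔ (A + Wᵀ * W).det ≠ 0 := by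
  constructor
  · intro hrank hdet
    obtain ⟨v, hv0, hv⟩ := exists_mulVec_eq_zero_iff.mpr hdet
    obtain ⟨hAv, hWv⟩ := (mulVec_add_transpose_mul_self_eq_zero_iff hA hAW v).mp hv
    obtain ⟨u, rfl⟩ : ∃ u, Wᵀ *ᵥ u = v := by
      have hmem : v ∈ Submodule.span K (Set.range W.row) :=
        (span_row_eq_ker_of_rank_eq hW hAW hrank).symm ▸ hAv
      obtain ⟨u, hu⟩ := (Submodule.mem_span_range_iff_exists_fun K).mp hmem
      exact ⟨u, by rw [mulVec_transpose, vecMul_eq_sum]; exact hu⟩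
    refine hv0 (dotProduct_self_eq_zero.mp ?_)
    rw [mulVec_transpose, ← dotProduct_mulVec, ← mulVec_transpose, hWv, dotProduct_zero]
  · intro hdet
    have h := rank_add_le A (Wᵀ * W)
    rw [rank_of_det_ne_zero hdet, rank_transpose_mul_self, hW.rank_matrix] at h
    have := rank_add_card_le_of_mul_transpose_eq_zero hW hAW
    omega

end Matrix

section Projection

variable {d : ℕ}

theorem proj_isSymm (x : Fin d → ℝ) : (proj x).IsSymm := by
  simp [IsSymm, proj, transpose_vecMulVec]

theorem proj_neg (x : Fin d → ℝ) : proj (-x) = proj x := by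
  simp [proj]

theorem proj_mulVec_self (x : Fin d → ℝ) : proj x *ᵥ x = 0 := by
  rcases eq_or_ne x 0 with rfl | hx
  · simp
  · have hxx : x ⬝ᵥ x ≠ 0 := fun h => hx (dotProduct_self_eq_zero.mp h)
    simp [proj, sub_mulVec, smul_mulVec, vecMulVec_mulVec, hxx]

noncomputable def projNumerator {R : Type*} [CommRing R] (x : Fin d → R) :
    Matrix (Fin d) (Fin d) R :=
  (x ⬝ᵥ x) • 1 - vecMulVec x x

theorem projNumerator_map {R S : Type*} [CommRing R] [CommRing S] (f : R →+* S)
    (x : Fin d → R) :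
    (projNumerator x).map f = projNumerator fun a => f (x a) := by
  ext a b
  simp [projNumerator, RingHom.map_dotProduct, Function.comp_def, one_apply, apply_ite f,
    vecMulVec_apply]

theorem dotProduct_self_smul_proj (x : Fin d → ℝ) :
    (x ⬝ᵥ x) • proj x = projNumerator x := by
  rcases eq_or_ne x 0 with rfl | hx
  · simp [projNumerator]
  · have hxx : x ⬝ᵥ x ≠ 0 := fun h => hx (dotProduct_self_eq_zero.mp h)
    simp [proj, projNumerator, smul_sub, smul_smul, hxx]

end Projection

section BlockLaplacian

variable {V m R : Type*} [Fintype V] [CommRing R]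

open scoped Classical

noncomputable def blockLaplacian (G : SimpleGraph V) (P : V → V → Matrix m m R) :
    Matrix (V × m) (V × m) R :=
  fun q r =>
    if q.1 = r.1 then (∑ k ∈ Finset.univ.filter (fun k => G.Adj q.1 k), P q.1 k) q.2 r.2
    else if G.Adj q.1 r.1 then -(P q.1 r.1 q.2 r.2) else 0

theorem bearingLaplacian_eq_blockLaplacian {d : ℕ} (G : SimpleGraph V) (p : V → Fin d → ℝ) :
    bearingLaplacian G p = blockLaplacian G (fun i j => proj (p j - p i)) := rfl

variable (G : SimpleGraph V)

theorem blockLaplacian_mulVec [Fintype m] (P : V → V → Matrix m m R) (v : V × m → R) (i : V)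
    (a : m) :
    (blockLaplacian G P *ᵥ v) (i, a) =
      ∑ j ∈ Finset.univ.filter (fun k => G.Adj i k),
        (P i j *ᵥ fun b => v (i, b) - v (j, b)) a := by
  have hentry : ∀ r : V × m, blockLaplacian G P (i, a) r =
      (if i = r.1 then (∑ k ∈ Finset.univ.filter (fun k => G.Adj i k), P i k) a r.2 else 0) +
        if G.Adj i r.1 then -(P i r.1 a r.2) else 0 := by
    rintro ⟨j, b⟩
    by_cases hij : i = j
    · subst hij; simp [blockLaplacian]
    · simp [blockLaplacian, hij]
  rw [mulVec, dotProduct, Fintype.sum_prod_type]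
  simp only [hentry, add_mul, Finset.sum_add_distrib, ite_mul, zero_mul, Finset.sum_ite_irrel,
    Finset.sum_const_zero, Finset.sum_ite_eq, Finset.mem_univ, if_true, ← Finset.sum_filter,
    Matrix.sum_apply, Finset.sum_mul, neg_mul, Finset.sum_neg_distrib, mulVec, dotProduct, mul_sub,
    Finset.sum_sub_distrib]
  rw [Finset.sum_comm, ← sub_eq_add_neg]

theorem blockLaplacian_mulVec_eq_zero [Fintype m] {P : V → V → Matrix m m R} {v : V × m → R}
    (h : ∀ i j, G.Adj i j → P i j *ᵥ (fun b => v (i, b) - v (j, b)) = 0) :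
    blockLaplacian G P *ᵥ v = 0 := by
  ext ⟨i, a⟩
  rw [blockLaplacian_mulVec]
  exact Finset.sum_eq_zero fun j hj => by rw [h i j (Finset.mem_filter.mp hj).2]; rfl

theorem blockLaplacian_isSymm {P : V → V → Matrix m m R} (hsymm : ∀ i j, (P i j).IsSymm)
    (hswap : ∀ i j, P j i = P i j) : (blockLaplacian G P).IsSymm := by
  refine IsSymm.ext_iff.mpr fun ⟨i, a⟩ ⟨j, b⟩ => ?_
  by_cases hij : i = j
  · subst hij
    simp only [blockLaplacian, if_true, Matrix.sum_apply]
    exact Finset.sum_congr rfl fun k _ => (hsymm i k).apply a b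
  · simp only [blockLaplacian, hij, Ne.symm hij, if_false, G.adj_comm j i, hswap i j,
      (hsymm i j).apply]

theorem blockLaplacian_map {S : Type*} [CommRing S] (f : R →+* S) (P : V → V → Matrix m m R) :
    (blockLaplacian G P).map f = blockLaplacian G fun i j => (P i j).map f := by
  ext q r
  simp [blockLaplacian, apply_ite f, Matrix.sum_apply]

theorem smul_blockLaplacian (c : R) (P : V → V → Matrix m m R) :
    c • blockLaplacian G P = blockLaplacian G fun i j => c • P i j := by
  ext q r
  simp [blockLaplacian, Matrix.sum_apply, Finset.mul_sum, mul_ite]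

theorem blockLaplacian_congr {P P' : V → V → Matrix m m R}
    (h : ∀ i j, G.Adj i j → P i j = P' i j) :
    blockLaplacian G P = blockLaplacian G P' := by
  ext q r
  simp only [blockLaplacian]
  split_ifs with _ hadj
  · rw [Finset.sum_congr rfl fun k hk => h q.1 k (Finset.mem_filter.mp hk).2]
  · rw [h _ _ hadj]
  · rfl

end BlockLaplacian

section BearingRigidity

variable {V : Type*} {d : ℕ}

-- Row `inl b` is the translation along axis `b`, row `inr ()` the scaling `p` itself.
def trivialMotions {R : Type*} [CommRing R] (p : V → Fin d → R) :
    Matrix (Fin d ⊕ Unit) (V × Fin d) R :=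
  of <| Sum.elim (fun b x => if x.2 = b then 1 else 0) (fun _ x => p x.1 x.2)

theorem trivialMotions_map {R S : Type*} [CommRing R] [CommRing S] (f : R →+* S)
    (p : V → Fin d → R) : (trivialMotions p).map f = trivialMotions fun i a => f (p i a) := by
  ext (_ | _) x <;> simp [trivialMotions, apply_ite f]

theorem linearIndependent_trivialMotions {p : V → Fin d → ℝ} (hp : ∃ i j, p i ≠ p j) :
    LinearIndependent ℝ (trivialMotions p).row := by
  rw [Fintype.linearIndependent_iff]
  intro g hg
  have heval : ∀ i a, g (.inl a) + g (.inr ()) * p i a = 0 := fun i a => by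
    simpa [trivialMotions, row, Finset.sum_apply] using congrFun hg (i, a)
  obtain ⟨i, j, hij⟩ := hp
  obtain ⟨a, ha⟩ := Function.ne_iff.mp hij
  have hscale : g (.inr ()) = 0 := by
    have : g (.inr ()) * (p i a - p j a) = 0 := by linear_combination heval i a - heval j a
    exact (mul_eq_zero.mp this).resolve_right (sub_ne_zero.mpr ha)
  rintro (b | ⟨⟩)
  · simpa [hscale] using heval i b
  · exact hscale

variable [Fintype V]

def IsBearingRigid (G : SimpleGraph V) (p : V → Fin d → ℝ) : Prop :=
  Function.Injective p ∧ (bearingLaplacian G p).rank = d * Fintype.card V - d - 1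

variable (G : SimpleGraph V)

theorem bearingLaplacian_isSymm (p : V → Fin d → ℝ) : (bearingLaplacian G p).IsSymm := by
  rw [bearingLaplacian_eq_blockLaplacian]
  exact blockLaplacian_isSymm G (fun _ _ => proj_isSymm _) fun i j => by
    rw [← neg_sub, proj_neg]

theorem bearingLaplacian_mul_trivialMotions_transpose (p : V → Fin d → ℝ) :
    bearingLaplacian G p * (trivialMotions p)ᵀ = 0 := by
  suffices h : ∀ c, bearingLaplacian G p *ᵥ trivialMotions p c = 0 by
    ext x c
    simpa [mul_apply, mulVec, dotProduct] using congrFun (h c) x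
  rw [bearingLaplacian_eq_blockLaplacian]
  rintro (_ | _) <;> refine blockLaplacian_mulVec_eq_zero G fun i j _ => ?_
  · simp only [trivialMotions, of_apply, Sum.elim_inl, sub_self]
    exact mulVec_zero _
  · simp only [trivialMotions, of_apply, Sum.elim_inr]
    rw [show (fun a => p i a - p j a) = -(p j - p i) by ext; simp, mulVec_neg, proj_mulVec_self,
      neg_zero]

theorem rank_bearingLaplacian_eq_iff [DecidableEq V] {p : V → Fin d → ℝ}
    (hp : ∃ i j, p i ≠ p j) :
    (bearingLaplacian G p).rank = d * Fintype.card V - d - 1 ↔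
      (bearingLaplacian G p + (trivialMotions p)ᵀ * trivialMotions p).det ≠ 0 := by
  rw [← rank_eq_card_sub_card_iff_det_add_transpose_mul_self_ne_zero
    (bearingLaplacian_isSymm G p) (linearIndependent_trivialMotions hp)
    (bearingLaplacian_mul_trivialMotions_transpose G p)]
  simp [Fintype.card_prod, mul_comm, Nat.sub_sub]

theorem isBearingRigid_of_subsingleton [Subsingleton V] (p : V → Fin d → ℝ) :
    IsBearingRigid G p := by
  refine ⟨Function.injective_of_subsingleton p, ?_⟩
  have hL : bearingLaplacian G p = 0 := by
    have hadj : ∀ i j, ¬ G.Adj i j := fun i j h => G.ne_of_adj h (Subsingleton.elim i j)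
    ext ⟨i, a⟩ ⟨j, b⟩
    simp [bearingLaplacian, hadj]
  have hV : d * Fintype.card V ≤ d := by
    simpa using Nat.mul_le_mul_left d (Fintype.card_le_one_iff_subsingleton.mpr ‹_›)
  rw [hL, rank_zero]
  omega

end BearingRigidity

section PolynomialCurve

open Polynomial

variable {V : Type*} {d : ℕ}

noncomputable def evalCurve (Q : V → Fin d → ℝ[X]) (t : ℝ) : V → Fin d → ℝ :=
  fun i a => (Q i a).eval t

noncomputable def segmentCurve (p₀ p₁ : V → Fin d → ℝ) : V → Fin d → ℝ[X] :=
  fun i a => C (p₀ i a) + C (p₁ i a - p₀ i a) * X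

theorem evalCurve_segmentCurve (p₀ p₁ : V → Fin d → ℝ) (t : ℝ) :
    evalCurve (segmentCurve p₀ p₁) t = p₀ + t • (p₁ - p₀) := by
  ext i a
  simp [evalCurve, segmentCurve, mul_comm]

variable (G : SimpleGraph V) (Q : V → Fin d → ℝ[X])

noncomputable def sqDist (i j : V) : ℝ[X] := (Q j - Q i) ⬝ᵥ (Q j - Q i)

theorem eval_sqDist (t : ℝ) (i j : V) :
    (sqDist Q i j).eval t =
      (evalCurve Q t j - evalCurve Q t i) ⬝ᵥ (evalCurve Q t j - evalCurve Q t i) := by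
  rw [sqDist, ← coe_evalRingHom, RingHom.map_dotProduct]
  congr 1 <;> ext a <;> simp [evalCurve]

variable [Fintype V]

noncomputable def collisionPoly : ℝ[X] := ∏ e ∈ Finset.univ.offDiag, sqDist Q e.1 e.2

theorem eval_collisionPoly_ne_zero_iff (t : ℝ) :
    (collisionPoly Q).eval t ≠ 0 ↔ Function.Injective (evalCurve Q t) := by
  simp only [collisionPoly, eval_prod, Finset.prod_ne_zero_iff, eval_sqDist, Finset.mem_offDiag,
    Finset.mem_univ, true_and, Prod.forall, ne_eq, dotProduct_self_eq_zero, sub_eq_zero,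
    Function.injective_iff_pairwise_ne, Pairwise, Function.onFun]
  exact forall_congr' fun i => forall_congr' fun j => imp_congr_right fun _ => ne_comm

variable [DecidableEq V]

noncomputable def collisionCofactor (i j : V) : ℝ[X] :=
  ∏ e ∈ Finset.univ.offDiag.erase (i, j), sqDist Q e.1 e.2

theorem sqDist_mul_collisionCofactor {i j : V} (hij : i ≠ j) :
    sqDist Q i j * collisionCofactor Q i j = collisionPoly Q := by
  have hmem : (i, j) ∈ (Finset.univ : Finset V).offDiag :=
    Finset.mem_offDiag.mpr ⟨Finset.mem_univ _, Finset.mem_univ _, hij⟩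
  have h := Finset.mul_prod_erase _ (fun e => sqDist Q e.1 e.2) hmem
  rwa [collisionPoly, collisionCofactor]

noncomputable def rigidityMatrix : Matrix (V × Fin d) (V × Fin d) ℝ[X] :=
  blockLaplacian G (fun i j => collisionCofactor Q i j • projNumerator (Q j - Q i)) +
    collisionPoly Q • ((trivialMotions Q)ᵀ * trivialMotions Q)

theorem rigidityMatrix_map_eval (t : ℝ) :
    (rigidityMatrix G Q).map (eval t) = (collisionPoly Q).eval t •
      (bearingLaplacian G (evalCurve Q t) +
        (trivialMotions (evalCurve Q t))ᵀ * trivialMotions (evalCurve Q t)) := by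
  rw [← coe_evalRingHom, rigidityMatrix, Matrix.map_add _ (map_add _),
    Matrix.map_smul' _ _ _ (map_mul _), blockLaplacian_map,
    smul_add, bearingLaplacian_eq_blockLaplacian, smul_blockLaplacian]
  congr 1
  · refine blockLaplacian_congr G fun i j hij => ?_
    have hdiff : (fun a => evalRingHom t ((Q j - Q i) a)) = evalCurve Q t j - evalCurve Q t i := by
      ext; simp [evalCurve]
    rw [Matrix.map_smul' _ _ _ (map_mul _), projNumerator_map, hdiff, ← dotProduct_self_smul_proj,
      smul_smul, ← sqDist_mul_collisionCofactor Q (G.ne_of_adj hij), map_mul, coe_evalRingHom,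
      eval_sqDist, mul_comm]
  · rw [Matrix.map_mul, transpose_map, trivialMotions_map]
    rfl

noncomputable def rigidityPoly : ℝ[X] := collisionPoly Q * (rigidityMatrix G Q).det

theorem isBearingRigid_evalCurve_iff [Nontrivial V] (t : ℝ) :
    IsBearingRigid G (evalCurve Q t) ↔ (rigidityPoly G Q).eval t ≠ 0 := by
  have hdet : (rigidityMatrix G Q).det.eval t =
      (collisionPoly Q).eval t ^ Fintype.card (V × Fin d) * (bearingLaplacian G (evalCurve Q t) +
        (trivialMotions (evalCurve Q t))ᵀ * trivialMotions (evalCurve Q t)).det := by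
    rw [← coe_evalRingHom, RingHom.map_det, RingHom.mapMatrix_apply, coe_evalRingHom,
      rigidityMatrix_map_eval, det_smul]
  rw [rigidityPoly, eval_mul, hdet, ← mul_assoc, ← pow_succ', mul_ne_zero_iff,
    pow_ne_zero_iff (Nat.succ_ne_zero _), eval_collisionPoly_ne_zero_iff]
  refine and_congr_right fun hinj => ?_
  obtain ⟨i, j, hij⟩ := exists_pair_ne V
  exact rank_bearingLaplacian_eq_iff G ⟨i, j, hinj.ne hij⟩

theorem finite_setOf_not_isBearingRigid_evalCurve (h : ∃ t, IsBearingRigid G (evalCurve Q t)) :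
    {t | ¬ IsBearingRigid G (evalCurve Q t)}.Finite := by
  rcases subsingleton_or_nontrivial V with _ | _
  · simp [isBearingRigid_of_subsingleton]
  · obtain ⟨t₁, ht₁⟩ := h
    have hP : rigidityPoly G Q ≠ 0 := fun h0 =>
      (isBearingRigid_evalCurve_iff G Q t₁).mp ht₁ (by rw [h0, eval_zero])
    simpa [isBearingRigid_evalCurve_iff] using finite_setOfPred_isRoot hP

end PolynomialCurve

open Filter Topology

theorem stmt12 {n d : ℕ} (G : SimpleGraph (Fin n))
    (h : ∃ p : Fin n → Fin d → ℝ, Function.Injective p ∧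
      (bearingLaplacian G p).rank = d * n - d - 1) :
    ∀ (p₀ : Fin n → Fin d → ℝ) (ε : ℝ), 0 < ε →
      ∃ p : Fin n → Fin d → ℝ, Function.Injective p ∧
        (bearingLaplacian G p).rank = d * n - d - 1 ∧ dist p p₀ < ε := by
  intro p₀ ε hε
  obtain ⟨p₁, hp₁⟩ := h
  have hfinite := finite_setOf_not_isBearingRigid_evalCurve G (segmentCurve p₀ p₁)
    ⟨1, by simpa [IsBearingRigid, evalCurve_segmentCurve] using hp₁⟩
  have hclose : ∀ᶠ t in 𝓝 (0 : ℝ), dist (p₀ + t • (p₁ - p₀)) p₀ < ε := by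
    have hcont : Continuous fun t : ℝ => p₀ + t • (p₁ - p₀) := by fun_prop
    exact (hcont.tendsto' 0 p₀ (by simp)).eventually (Metric.ball_mem_nhds p₀ hε)
  obtain ⟨t, hrigid, hdist⟩ := ((hfinite.eventually_cofinite_notMem.filter_mono
    (nhdsNE_le_cofinite 0)).and (nhdsWithin_le_nhds hclose)).exists
  simp only [Set.mem_ofPred_eq, not_not, IsBearingRigid, evalCurve_segmentCurve,
    Fintype.card_fin] at hrigid
  exact ⟨_, hrigid.1, hrigid.2, hdist⟩
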